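/- arXiv:1708.05239 — 4 statements merged into one kernel-verified Lean document; each statement's English description precedes it below -/
import Mathlib

section
/- (Unbiasedness of the post-hoc weighting, Theorem 1.) If X_{1:N} is distributed according to the pseudo-extended target π^N, then for any bounded measurable f, E_{π^N}[ (Σ_{i=1}^N f(X_i) γ(X_i)/q(X_i)) / (Σ_{i=1}^N γ(X_i)/q(X_i)) ] = E_π[f(X)]. -/
/-!
Write `w = γ / q`. Since `γ = w q` (the support condition), the pseudo-extended density is
`(N Z)⁻¹ (∑ i, w (x i)) ∏ j, q (x j)`, so the self-normalizing denominator cancels and the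
integrand becomes `(N Z)⁻¹ ∑ i, f (x i) γ (x i) ∏ j ≠ i, q (x j)`. By Fubini each of the `N`
terms integrates to `∫ f γ`, because `∫ q = 1`.
-/

open MeasureTheory Finset

section PseudoExtended

variable {ι α 𝕜 : Type*} [Fintype ι] [DecidableEq ι]

theorem prod_update_comp_eq_mul_prod_sdiff [CommMonoid 𝕜] (g q : α → 𝕜) (x : ι → α) (i : ι) :
    ∏ j, Function.update (fun _ ↦ q) i g j (x j) = g (x i) * ∏ j ∈ univ \ {i}, q (x j) := by
  rw [← prod_update_of_mem (mem_univ i)]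
  refine prod_congr rfl fun j _ ↦ ?_
  rcases eq_or_ne j i with rfl | hj <;> simp [*]

theorem mul_prod_sdiff_eq_div_mul_prod [Field 𝕜] {g q : α → 𝕜} (hg : ∀ a, q a = 0 → g a = 0)
    (x : ι → α) (i : ι) :
    g (x i) * ∏ j ∈ univ \ {i}, q (x j) = g (x i) / q (x i) * ∏ j, q (x j) := by
  rw [prod_eq_mul_prod_sdiff_singleton i _ fun h ↦ absurd (mem_univ i) h, ← mul_assoc,
    div_mul_cancel_of_imp (hg (x i))]

theorem self_normalized_mul_sum_mul_prod_sdiff (f γ q : α → ℝ) (hγ : ∀ a, 0 ≤ γ a)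
    (hq : ∀ a, 0 ≤ q a) (hsupp : ∀ a, q a = 0 → γ a = 0) (x : ι → α) :
    (∑ i, f (x i) * (γ (x i) / q (x i))) / (∑ i, γ (x i) / q (x i)) *
        ∑ i, γ (x i) * ∏ j ∈ univ \ {i}, q (x j)
      = ∑ i, f (x i) * γ (x i) * ∏ j ∈ univ \ {i}, q (x j) := by
  have hfγ : ∀ a, q a = 0 → f a * γ a = 0 := fun a ha ↦ by simp [hsupp a ha]
  simp_rw [mul_prod_sdiff_eq_div_mul_prod hsupp, mul_prod_sdiff_eq_div_mul_prod hfγ,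
    mul_div_assoc, ← sum_mul, ← mul_assoc]
  refine congrArg (· * _) (div_mul_cancel_of_imp fun hW ↦ sum_eq_zero fun i _ ↦ ?_)
  have hw := (sum_eq_zero_iff_of_nonneg fun i _ ↦ div_nonneg (hγ (x i)) (hq (x i))).1 hW i
    (mem_univ i)
  rw [hw, mul_zero]

variable [MeasurableSpace α] {μ : Measure α} [SigmaFinite μ] [RCLike 𝕜]

theorem integrable_mul_prod_sdiff {g q : α → 𝕜} (hg : Integrable g μ) (hq : Integrable q μ)
    (i : ι) :
    Integrable (fun x : ι → α ↦ g (x i) * ∏ j ∈ univ \ {i}, q (x j)) (Measure.pi fun _ ↦ μ) := by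
  simp_rw [← prod_update_comp_eq_mul_prod_sdiff]
  refine Integrable.fintype_prod fun j ↦ ?_
  rcases eq_or_ne j i with rfl | hj <;> simp [*]

theorem integral_mul_prod_sdiff_of_integral_eq_one (g q : α → 𝕜) (hq : ∫ a, q a ∂μ = 1)
    (i : ι) :
    ∫ x : ι → α, g (x i) * ∏ j ∈ univ \ {i}, q (x j) ∂(Measure.pi fun _ ↦ μ) = ∫ a, g a ∂μ := by
  have hint (j : ι) : ∫ a, Function.update (fun _ ↦ q) i g j a ∂μ
      = Function.update (fun _ ↦ (1 : 𝕜)) i (∫ a, g a ∂μ) j := by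
    rcases eq_or_ne j i with rfl | hj <;> simp [*]
  simp_rw [← prod_update_comp_eq_mul_prod_sdiff, integral_fintype_prod_eq_prod, hint,
    prod_update_of_mem (mem_univ i), prod_const_one, mul_one]

end PseudoExtended

theorem pseudo_extended_post_hoc_unbiased_general
    (d N : ℕ) (hN : 0 < N)
    (γ q f : (Fin d → ℝ) → ℝ) (Z : ℝ)
    (hγ0 : ∀ x, 0 ≤ γ x) (hγi : Integrable γ)
    (hq0 : ∀ x, 0 ≤ q x) (hqi : Integrable q)
    (hq1 : ∫ x, q x = 1)
    (hsupp : ∀ x, 0 < γ x → 0 < q x)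
    (hfm : Measurable f) (B : ℝ) (hfB : ∀ x, |f x| ≤ B) :
    ∫ xs : Fin N → (Fin d → ℝ),
      ((∑ i, f (xs i) * (γ (xs i) / q (xs i))) / (∑ i, γ (xs i) / q (xs i))) *
        ((1 / (N : ℝ)) * ∑ i, (γ (xs i) / Z) * ∏ j ∈ univ \ {i}, q (xs j))
    = ∫ x, f x * (γ x / Z) := by
  have hγq : ∀ x, q x = 0 → γ x = 0 := fun x hx ↦
    le_antisymm (not_lt.1 fun h ↦ (hsupp x h).ne' hx) (hγ0 x)
  have hfγ : Integrable (fun x ↦ f x * γ x) :=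
    hγi.bdd_mul hfm.aestronglyMeasurable (ae_of_all _ fun x ↦ (Real.norm_eq_abs _).trans_le (hfB x))
  have hN' : (N : ℝ) ≠ 0 := Nat.cast_ne_zero.2 hN.ne'
  have hintegrand (xs : Fin N → Fin d → ℝ) :
      (∑ i, f (xs i) * (γ (xs i) / q (xs i))) / (∑ i, γ (xs i) / q (xs i)) *
        ((1 / (N : ℝ)) * ∑ i, (γ (xs i) / Z) * ∏ j ∈ univ \ {i}, q (xs j))
      = Z⁻¹ * ((N : ℝ)⁻¹ * ∑ i, f (xs i) * γ (xs i) * ∏ j ∈ univ \ {i}, q (xs j)) := by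
    have hZ : ∑ i, γ (xs i) / Z * ∏ j ∈ univ \ {i}, q (xs j)
        = Z⁻¹ * ∑ i, γ (xs i) * ∏ j ∈ univ \ {i}, q (xs j) := by
      rw [mul_sum]
      exact sum_congr rfl fun _ _ ↦ by ring
    rw [← self_normalized_mul_sum_mul_prod_sdiff f γ q hγ0 hq0 hγq, hZ]
    ring
  simp_rw [hintegrand]
  rw [integral_const_mul, integral_const_mul, volume_pi,
    integral_finsetSum _ fun i _ ↦ integrable_mul_prod_sdiff hfγ hqi i]
  simp only [integral_mul_prod_sdiff_of_integral_eq_one (fun x ↦ f x * γ x) q hq1, sum_const,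
    card_univ, Fintype.card_fin, nsmul_eq_mul, inv_mul_cancel_left₀ hN']
  rw [← integral_const_mul]
  exact integral_congr_ae (ae_of_all _ fun x ↦ by ring)

/-- Unbiasedness of the post-hoc weighting (Theorem 1): the self-normalized
importance-weighted average of a bounded measurable f under the pseudo-extended
target equals the expectation of f under the target π = γ/Z. -/
theorem pseudo_extended_post_hoc_unbiased
    (d N : ℕ) (hN : 0 < N)
    (γ q f : (Fin d → ℝ) → ℝ) (Z : ℝ)
    (hγm : Measurable γ) (hγ0 : ∀ x, 0 ≤ γ x) (hγi : Integrable γ)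
    (hZ : Z = ∫ x, γ x) (hZpos : 0 < Z)
    (hqm : Measurable q) (hq0 : ∀ x, 0 ≤ q x) (hqi : Integrable q)
    (hq1 : ∫ x, q x = 1)
    (hsupp : ∀ x, 0 < γ x → 0 < q x)
    (hfm : Measurable f) (B : ℝ) (hfB : ∀ x, |f x| ≤ B) :
    ∫ xs : Fin N → (Fin d → ℝ),
      ((∑ i, f (xs i) * (γ (xs i) / q (xs i))) / (∑ i, γ (xs i) / q (xs i))) *
        ((1 / (N : ℝ)) * ∑ i, (γ (xs i) / Z) * ∏ j ∈ univ \ {i}, q (xs j))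
    = ∫ x, f x * (γ x / Z) :=
  pseudo_extended_post_hoc_unbiased_general d N hN γ q f Z hγ0 hγi hq0 hqi hq1 hsupp hfm B hfB
end

section
/- In the Gaussian integral trick for the Boltzmann machine, the joint density factorizes over the spins: π(x, s) ∝ exp(−x⊤x/2) Π_{k=1}^{d_b} exp(s_k (q_k⊤ x + b_k)), where the quadratic spin interaction term (1/2)s⊤Ws cancels. Precisely, for every s ∈ {−1,1}^{d_b} and x ∈ ℝ^d, P(s)·N(x | Q⊤s, I) = (2π)^{−d/2} Z_b^{−1} e^{−Tr(D)/2} · exp(−x⊤x/2) · Π_k exp(s_k(q_k⊤x + b_k)). -/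
open Matrix Real Finset

/-- Spin encoding of a Boolean configuration. -/
def spin {n : ℕ} (s : Fin n → Bool) : Fin n → ℝ := fun k => if s k then 1 else -1

/-- Gaussian integral trick for the Boltzmann machine: the joint density
factorizes over the spins, the quadratic spin interaction term cancelling. -/
theorem boltzmann_gaussian_integral_trick
    (db d : ℕ) (W D : Matrix (Fin db) (Fin db) ℝ) (Q : Matrix (Fin db) (Fin d) ℝ)
    (b : Fin db → ℝ) (Zb : ℝ)
    (hW : W.IsSymm) (hD : ∃ dv, D = Matrix.diagonal dv)
    (hPSD : (W + D).PosSemidef)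
    (hQ : Q * Qᵀ = W + D)
    (hZb : Zb = ∑ s : Fin db → Bool,
      Real.exp ((1/2) * (spin s ⬝ᵥ (W *ᵥ spin s)) + spin s ⬝ᵥ b))
    (s : Fin db → ℝ) (hs : ∀ k, s k = 1 ∨ s k = -1) (x : Fin d → ℝ) :
    (Zb⁻¹ * Real.exp ((1/2) * (s ⬝ᵥ (W *ᵥ s)) + s ⬝ᵥ b)) *
      ((2 * π) ^ (-(d : ℝ)/2) *
        Real.exp (-((x - Qᵀ *ᵥ s) ⬝ᵥ (x - Qᵀ *ᵥ s)) / 2))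
    = (2 * π) ^ (-(d : ℝ)/2) * Zb⁻¹ * Real.exp (-(D.trace) / 2) *
        Real.exp (-(x ⬝ᵥ x) / 2) *
        ∏ k, Real.exp (s k * ((Q *ᵥ x) k + b k)) := by
  have hss : ∀ k, s k * s k = 1 := by
    intro k; rcases hs k with h | h <;> rw [h] <;> norm_num
  -- s ⬝ D s = trace D
  have hDs : s ⬝ᵥ (D *ᵥ s) = D.trace := by
    obtain ⟨dv, rfl⟩ := hD
    simp only [dotProduct, mulVec_diagonal, Matrix.trace_diagonal]
    refine Finset.sum_congr rfl fun k _ => ?_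
    rw [mul_left_comm, hss k, mul_one]
  -- quadratic term
  have hQs : (Qᵀ *ᵥ s) ⬝ᵥ (Qᵀ *ᵥ s) = s ⬝ᵥ (W *ᵥ s) + D.trace := by
    have h1 : (Qᵀ *ᵥ s) ⬝ᵥ (Qᵀ *ᵥ s) = s ⬝ᵥ ((Q * Qᵀ) *ᵥ s) := by
      rw [← mulVec_mulVec, dotProduct_mulVec, vecMul_transpose]
      exact dotProduct_comm _ _
    rw [h1, hQ, add_mulVec, dotProduct_add, hDs]
  have hxQs : x ⬝ᵥ (Qᵀ *ᵥ s) = s ⬝ᵥ (Q *ᵥ x) := by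
    rw [dotProduct_mulVec s, ← mulVec_transpose, dotProduct_comm]
  have hQsx : (Qᵀ *ᵥ s) ⬝ᵥ x = s ⬝ᵥ (Q *ᵥ x) := by
    rw [dotProduct_comm, hxQs]
  have hexp : (x - Qᵀ *ᵥ s) ⬝ᵥ (x - Qᵀ *ᵥ s)
      = x ⬝ᵥ x - 2 * (s ⬝ᵥ (Q *ᵥ x)) + (s ⬝ᵥ (W *ᵥ s) + D.trace) := by
    rw [dotProduct_sub, sub_dotProduct, sub_dotProduct, hxQs, hQsx, hQs]
    ring
  have hprod : ∏ k, Real.exp (s k * ((Q *ᵥ x) k + b k))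
      = Real.exp (s ⬝ᵥ (Q *ᵥ x) + s ⬝ᵥ b) := by
    rw [← Real.exp_sum]
    congr 1
    simp only [dotProduct, mul_add, Finset.sum_add_distrib]
  have key : Real.exp ((1/2) * (s ⬝ᵥ (W *ᵥ s)) + s ⬝ᵥ b) *
      Real.exp (-(x ⬝ᵥ x - 2 * (s ⬝ᵥ (Q *ᵥ x)) + (s ⬝ᵥ (W *ᵥ s) + D.trace)) / 2)
      = Real.exp (-(D.trace) / 2) * Real.exp (-(x ⬝ᵥ x) / 2) *
        Real.exp (s ⬝ᵥ (Q *ᵥ x) + s ⬝ᵥ b) := by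
    rw [← Real.exp_add, ← Real.exp_add, ← Real.exp_add]
    congr 1
    ring
  rw [hprod, hexp]
  linear_combination ((2 * π) ^ (-(d : ℝ)/2) * Zb⁻¹) * key
end

section
/- Summing the Boltzmann joint density over all spin configurations yields the Boltzmann machine relaxation density: Σ_{s ∈ {−1,1}^{d_b}} P(s) N(x | Q⊤s, I) = C · exp(−x⊤x/2) · Π_{k=1}^{d_b} cosh(q_k⊤x + b_k), where C = 2^{d_b} (2π)^{−d/2} Z_b^{−1} e^{−Tr(D)/2}. -/
open Matrix Real Finset

lemma sum_exp_spin (n : ℕ) (v : Fin n → ℝ) :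
    ∑ s : Fin n → Bool, Real.exp (spin s ⬝ᵥ v) = 2 ^ n * ∏ k, Real.cosh (v k) := by
  have h1 : ∀ s : Fin n → Bool,
      Real.exp (spin s ⬝ᵥ v) = ∏ k, Real.exp ((if s k then (1:ℝ) else -1) * v k) := by
    intro s
    rw [← Real.exp_sum]
    simp [dotProduct, spin]
  simp_rw [h1]
  have h2 : ∑ s : Fin n → Bool, ∏ k, Real.exp ((if s k then (1:ℝ) else -1) * v k)
      = ∏ k, ∑ c : Bool, Real.exp ((if c then (1:ℝ) else -1) * v k) := by
    rw [Finset.prod_univ_sum]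
    rw [Fintype.piFinset_univ]
  rw [h2]
  have h3 : ∀ k, ∑ c : Bool, Real.exp ((if c then (1:ℝ) else -1) * v k)
      = 2 * Real.cosh (v k) := by
    intro k
    rw [Real.cosh_eq]
    simp [Fintype.sum_bool]
    ring
  simp_rw [h3]
  rw [Finset.prod_mul_distrib]
  simp

/-- Summing the Boltzmann joint density over all spin configurations yields the
Boltzmann machine relaxation density. -/
theorem boltzmann_relaxation_density
    (db d : ℕ) (W D : Matrix (Fin db) (Fin db) ℝ) (Q : Matrix (Fin db) (Fin d) ℝ)
    (b : Fin db → ℝ) (Zb : ℝ)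
    (hW : W.IsSymm) (hD : ∃ dv, D = Matrix.diagonal dv)
    (hPSD : (W + D).PosSemidef)
    (hQ : Q * Qᵀ = W + D)
    (hZb : Zb = ∑ s : Fin db → Bool,
      Real.exp ((1/2) * (spin s ⬝ᵥ (W *ᵥ spin s)) + spin s ⬝ᵥ b))
    (x : Fin d → ℝ) :
    ∑ s : Fin db → Bool,
      (Zb⁻¹ * Real.exp ((1/2) * (spin s ⬝ᵥ (W *ᵥ spin s)) + spin s ⬝ᵥ b)) *
        ((2 * π) ^ (-(d : ℝ)/2) *
          Real.exp (-((x - Qᵀ *ᵥ spin s) ⬝ᵥ (x - Qᵀ *ᵥ spin s)) / 2))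
    = (2 : ℝ) ^ db * (2 * π) ^ (-(d : ℝ)/2) * Zb⁻¹ * Real.exp (-(D.trace) / 2) *
        Real.exp (-(x ⬝ᵥ x) / 2) *
        ∏ k, Real.cosh ((Q *ᵥ x) k + b k) := by
  obtain ⟨dv, rfl⟩ := hD
  have key : ∀ s : Fin db → Bool,
      (Zb⁻¹ * Real.exp ((1/2) * (spin s ⬝ᵥ (W *ᵥ spin s)) + spin s ⬝ᵥ b)) *
        ((2 * π) ^ (-(d : ℝ)/2) *
          Real.exp (-((x - Qᵀ *ᵥ spin s) ⬝ᵥ (x - Qᵀ *ᵥ spin s)) / 2))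
      = (2 * π) ^ (-(d : ℝ)/2) * Zb⁻¹ *
          Real.exp (-((Matrix.diagonal dv).trace) / 2) * Real.exp (-(x ⬝ᵥ x) / 2) *
          Real.exp (spin s ⬝ᵥ (fun k => (Q *ᵥ x) k + b k)) := by
    intro s
    set sp := spin s with hsp
    have hsq : ∀ k, sp k * sp k = 1 := by
      intro k
      simp only [hsp, spin]
      by_cases h : s k <;> simp [h]
    -- dot product with D
    have hDs : sp ⬝ᵥ (Matrix.diagonal dv *ᵥ sp) = (Matrix.diagonal dv).trace := by
      simp only [dotProduct, Matrix.mulVec_diagonal, Matrix.trace,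
        Matrix.diag, Matrix.diagonal_apply_eq]
      refine Finset.sum_congr rfl fun k _ => ?_
      rw [show sp k * (dv k * sp k) = dv k * (sp k * sp k) by ring, hsq k, mul_one]
    -- cross terms
    have hx_u : x ⬝ᵥ (Qᵀ *ᵥ sp) = sp ⬝ᵥ (Q *ᵥ x) := by
      rw [Matrix.dotProduct_mulVec, Matrix.vecMul_transpose, dotProduct_comm]
    have hu_x : (Qᵀ *ᵥ sp) ⬝ᵥ x = sp ⬝ᵥ (Q *ᵥ x) := by
      rw [dotProduct_comm, hx_u]
    have hu_u : (Qᵀ *ᵥ sp) ⬝ᵥ (Qᵀ *ᵥ sp)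
        = sp ⬝ᵥ (W *ᵥ sp) + sp ⬝ᵥ (Matrix.diagonal dv *ᵥ sp) := by
      rw [Matrix.dotProduct_mulVec, Matrix.vecMul_transpose, Matrix.mulVec_mulVec,
        hQ, dotProduct_comm, Matrix.add_mulVec, dotProduct_add]
    have hquad : (x - Qᵀ *ᵥ sp) ⬝ᵥ (x - Qᵀ *ᵥ sp)
        = x ⬝ᵥ x - 2 * (sp ⬝ᵥ (Q *ᵥ x)) + (sp ⬝ᵥ (W *ᵥ sp) + (Matrix.diagonal dv).trace) := by
      rw [dotProduct_sub, sub_dotProduct, sub_dotProduct,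
        hx_u, hu_x, hu_u, hDs]
      ring
    have hlin : sp ⬝ᵥ (fun k => (Q *ᵥ x) k + b k) = sp ⬝ᵥ (Q *ᵥ x) + sp ⬝ᵥ b := by
      simp [dotProduct, mul_add, Finset.sum_add_distrib]
    rw [hquad, hlin]
    have hexp : Real.exp (1/2 * (sp ⬝ᵥ (W *ᵥ sp)) + sp ⬝ᵥ b) *
        Real.exp (-(x ⬝ᵥ x - 2 * (sp ⬝ᵥ (Q *ᵥ x)) +
          (sp ⬝ᵥ (W *ᵥ sp) + (Matrix.diagonal dv).trace)) / 2)
        = Real.exp (-(Matrix.diagonal dv).trace / 2) * Real.exp (-(x ⬝ᵥ x) / 2) *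
          Real.exp (sp ⬝ᵥ (Q *ᵥ x) + sp ⬝ᵥ b) := by
      rw [← Real.exp_add, ← Real.exp_add, ← Real.exp_add]
      congr 1; ring
    linear_combination ((2 * π) ^ (-(d:ℝ)/2) * Zb⁻¹) * hexp
  rw [Finset.sum_congr rfl (fun s _ => key s), ← Finset.mul_sum, sum_exp_spin]
  ring
end

section
/- The normalizing constant of the Boltzmann machine relaxation density satisfies log Z = log Z_b + (1/2)Tr(D) + (d/2)log(2π) − d_b log 2, where Z = ∫ exp(−φ(x)) dx with φ(x) = (1/2)x⊤x − Σ_{k=1}^{d_b} log cosh(q_k⊤ x + b_k). -/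
open Matrix Real Finset MeasureTheory

/-!
Expanding `cosh y = (e^y + e^{-y}) / 2` in every factor of `e^{-φ}` turns the integrand into
`2^{-d_b}` times a sum over spin configurations `s` of `e^{s⊤b}` times a Gaussian with linear
term `(Q⊤s)⊤x`. Each Gaussian integrates to `(2π)^{d/2} e^{‖Q⊤s‖²/2}`, and
`‖Q⊤s‖² = s⊤(W + D)s = s⊤Ws + Tr D` because `s_k² = 1`.
Hence `Z = 2^{-d_b} (2π)^{d/2} e^{Tr D/2} Z_b`.
-/

noncomputable def relaxationPotential {db d : ℕ} (Q : Matrix (Fin db) (Fin d) ℝ) (b : Fin db → ℝ)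
    (x : Fin d → ℝ) : ℝ :=
  (1/2) * (x ⬝ᵥ x) - ∑ k, log (cosh ((Q *ᵥ x) k + b k))

lemma exp_neg_half_sq_add_mul_eq (a t : ℝ) :
    exp (-(1/2) * t^2 + a * t) = exp (-(1/2) * (t - a)^2) * exp (a^2/2) := by
  rw [← exp_add]
  ring_nf

lemma integrable_exp_neg_half_sq_add_mul (a : ℝ) :
    Integrable (fun t : ℝ => exp (-(1/2) * t^2 + a * t)) := by
  simp_rw [exp_neg_half_sq_add_mul_eq a]
  exact ((integrable_exp_neg_mul_sq (by norm_num : (0:ℝ) < 1/2)).comp_sub_right a).mul_const _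

lemma integral_exp_neg_half_sq_add_mul (a : ℝ) :
    ∫ t : ℝ, exp (-(1/2) * t^2 + a * t) = √(2 * π) * exp (a^2/2) := by
  simp_rw [exp_neg_half_sq_add_mul_eq a]
  rw [integral_mul_const, integral_sub_right_eq_self (fun t : ℝ => exp (-(1/2) * t^2)) a,
    integral_gaussian, div_div_eq_mul_div, div_one, mul_comm π]

section Gaussian

variable {ι : Type*} [Fintype ι]

lemma exp_neg_half_dotProduct_self_add_dotProduct (u x : ι → ℝ) :
    exp (-(1/2) * (x ⬝ᵥ x) + u ⬝ᵥ x) = ∏ j, exp (-(1/2) * x j ^ 2 + u j * x j) := by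
  rw [← exp_sum, dotProduct, dotProduct, Finset.mul_sum, ← Finset.sum_add_distrib]
  simp only [sq]

lemma integrable_exp_neg_half_dotProduct_self_add_dotProduct (u : ι → ℝ) :
    Integrable (fun x : ι → ℝ => exp (-(1/2) * (x ⬝ᵥ x) + u ⬝ᵥ x)) := by
  simp_rw [exp_neg_half_dotProduct_self_add_dotProduct u]
  exact Integrable.fintype_prod_dep fun j => integrable_exp_neg_half_sq_add_mul (u j)

lemma integral_exp_neg_half_dotProduct_self_add_dotProduct (u : ι → ℝ) :
    ∫ x : ι → ℝ, exp (-(1/2) * (x ⬝ᵥ x) + u ⬝ᵥ x)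
      = √(2 * π) ^ Fintype.card ι * exp (u ⬝ᵥ u / 2) := by
  simp_rw [exp_neg_half_dotProduct_self_add_dotProduct u]
  rw [integral_fintype_prod_volume_eq_prod (fun j t => exp (-(1/2) * t^2 + u j * t)),
    Finset.prod_congr rfl fun j _ => integral_exp_neg_half_sq_add_mul (u j),
    Finset.prod_mul_distrib, Finset.prod_const, ← exp_sum, Finset.card_univ, dotProduct,
    Finset.sum_div]
  simp only [sq]

end Gaussian

lemma vecMul_dotProduct_vecMul_self {m n R : Type*} [Fintype m] [Fintype n] [CommSemiring R]
    (v : m → R) (Q : Matrix m n R) : (v ᵥ* Q) ⬝ᵥ (v ᵥ* Q) = v ⬝ᵥ ((Q * Qᵀ) *ᵥ v) := by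
  rw [← dotProduct_mulVec, ← mulVec_transpose, mulVec_mulVec]

lemma spin_mul_self {n : ℕ} (s : Fin n → Bool) (k : Fin n) : spin s k * spin s k = 1 := by
  by_cases h : s k <;> simp [spin, h]

lemma spin_dotProduct_diagonal_mulVec {n : ℕ} (s : Fin n → Bool) (dv : Fin n → ℝ) :
    spin s ⬝ᵥ (diagonal dv *ᵥ spin s) = (diagonal dv).trace := by
  rw [trace_diagonal, dotProduct]
  refine Finset.sum_congr rfl fun k _ => ?_
  rw [mulVec_diagonal, mul_left_comm, spin_mul_self, mul_one]

lemma cosh_eq_sum_bool (y : ℝ) : cosh y = ∑ t : Bool, (1/2) * exp ((if t then 1 else -1) * y) := by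
  rw [cosh_eq, Fintype.sum_bool, if_pos rfl, if_neg Bool.false_ne_true, one_mul, neg_one_mul]
  ring

lemma prod_cosh_eq_sum_spin {n : ℕ} (y : Fin n → ℝ) :
    ∏ k, cosh (y k) = (1/2)^n * ∑ s : Fin n → Bool, exp (spin s ⬝ᵥ y) := by
  simp only [cosh_eq_sum_bool, Finset.prod_univ_sum, Fintype.piFinset_univ, Finset.mul_sum,
    Finset.prod_mul_distrib, Finset.prod_const, Finset.card_univ, Fintype.card_fin, ← exp_sum]
  rfl

lemma exp_neg_relaxationPotential {db d : ℕ} (Q : Matrix (Fin db) (Fin d) ℝ) (b : Fin db → ℝ)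
    (x : Fin d → ℝ) :
    exp (-relaxationPotential Q b x) = (1/2)^db * ∑ s : Fin db → Bool,
      exp (spin s ⬝ᵥ b) * exp (-(1/2) * (x ⬝ᵥ x) + (spin s ᵥ* Q) ⬝ᵥ x) := by
  have hcosh : exp (-relaxationPotential Q b x)
      = (∏ k, cosh ((Q *ᵥ x + b) k)) * exp (-(1/2) * (x ⬝ᵥ x)) := by
    rw [relaxationPotential, neg_sub, sub_eq_add_neg, exp_add, exp_sum, neg_mul]
    simp only [exp_log (cosh_pos _), Pi.add_apply]
  rw [hcosh, prod_cosh_eq_sum_spin, mul_assoc, Finset.sum_mul]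
  congr 1
  refine Finset.sum_congr rfl fun s _ => ?_
  rw [← exp_add, ← exp_add, dotProduct_add, dotProduct_mulVec]
  ring_nf

lemma integral_exp_neg_relaxationPotential {db d : ℕ} (Q : Matrix (Fin db) (Fin d) ℝ)
    (b : Fin db → ℝ) :
    ∫ x, exp (-relaxationPotential Q b x) = (1/2)^db * √(2 * π) ^ d * ∑ s : Fin db → Bool,
      exp (spin s ⬝ᵥ b + spin s ⬝ᵥ ((Q * Qᵀ) *ᵥ spin s) / 2) := by
  simp_rw [exp_neg_relaxationPotential]
  rw [integral_const_mul, integral_finsetSum _ fun s _ =>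
    (integrable_exp_neg_half_dotProduct_self_add_dotProduct _).const_mul _]
  simp only [integral_const_mul, integral_exp_neg_half_dotProduct_self_add_dotProduct,
    Fintype.card_fin, vecMul_dotProduct_vecMul_self, Finset.mul_sum]
  refine Finset.sum_congr rfl fun s _ => ?_
  rw [exp_add]
  ring

theorem boltzmann_relaxation_log_normalizer_general
    (db d : ℕ) (W D : Matrix (Fin db) (Fin db) ℝ) (Q : Matrix (Fin db) (Fin d) ℝ)
    (b : Fin db → ℝ) (Zb Z : ℝ)
    (hD : ∃ dv, D = Matrix.diagonal dv)
    (hQ : Q * Qᵀ = W + D)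
    (hZb : Zb = ∑ s : Fin db → Bool,
      Real.exp ((1/2) * (spin s ⬝ᵥ (W *ᵥ spin s)) + spin s ⬝ᵥ b))
    (hZ : Z = ∫ x : Fin d → ℝ,
      Real.exp (-((1/2) * (x ⬝ᵥ x) - ∑ k, Real.log (Real.cosh ((Q *ᵥ x) k + b k))))) :
    Real.log Z
      = Real.log Zb + D.trace / 2 + ((d : ℝ) / 2) * Real.log (2 * π)
        - (db : ℝ) * Real.log 2 := by
  obtain ⟨dv, rfl⟩ := hD
  have hZ' : Z = (1/2)^db * √(2 * π) ^ d * exp ((diagonal dv).trace / 2) * Zb := by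
    have hquad (s : Fin db → Bool) :
        exp (spin s ⬝ᵥ b + spin s ⬝ᵥ ((W + diagonal dv) *ᵥ spin s) / 2)
          = exp ((diagonal dv).trace / 2)
            * exp ((1/2) * (spin s ⬝ᵥ (W *ᵥ spin s)) + spin s ⬝ᵥ b) := by
      rw [add_mulVec, dotProduct_add, spin_dotProduct_diagonal_mulVec, ← exp_add]
      ring_nf
    change Z = ∫ x, exp (-relaxationPotential Q b x) at hZ
    rw [hZ, integral_exp_neg_relaxationPotential, hQ, hZb]
    simp only [hquad, ← Finset.mul_sum]
    ring
  have hZb_pos : 0 < Zb := by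
    rw [hZb]
    exact Finset.sum_pos (fun s _ => exp_pos _) Finset.univ_nonempty
  rw [hZ', log_mul (by positivity) hZb_pos.ne', log_mul (by positivity) (by positivity),
    log_mul (by positivity) (by positivity), log_exp, log_pow, log_pow,
    log_sqrt (by positivity), one_div, log_inv]
  ring

/-- The normalizing constant of the Boltzmann machine relaxation density
satisfies log Z = log Z_b + Tr(D)/2 + (d/2) log(2π) − d_b log 2. -/
theorem boltzmann_relaxation_log_normalizer
    (db d : ℕ) (W D : Matrix (Fin db) (Fin db) ℝ) (Q : Matrix (Fin db) (Fin d) ℝ)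
    (b : Fin db → ℝ) (Zb Z : ℝ)
    (hW : W.IsSymm) (hD : ∃ dv, D = Matrix.diagonal dv)
    (hPSD : (W + D).PosSemidef)
    (hQ : Q * Qᵀ = W + D)
    (hZb : Zb = ∑ s : Fin db → Bool,
      Real.exp ((1/2) * (spin s ⬝ᵥ (W *ᵥ spin s)) + spin s ⬝ᵥ b))
    (hInt : Integrable (fun x : Fin d → ℝ =>
      Real.exp (-((1/2) * (x ⬝ᵥ x) - ∑ k, Real.log (Real.cosh ((Q *ᵥ x) k + b k)))))
      )
    (hZ : Z = ∫ x : Fin d → ℝ,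
      Real.exp (-((1/2) * (x ⬝ᵥ x) - ∑ k, Real.log (Real.cosh ((Q *ᵥ x) k + b k))))) :
    Real.log Z
      = Real.log Zb + D.trace / 2 + ((d : ℝ) / 2) * Real.log (2 * π)
        - (db : ℝ) * Real.log 2 :=
  boltzmann_relaxation_log_normalizer_general db d W D Q b Zb Z hD hQ hZb hZ
end
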